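/- For every w ∈ W and x ∈ C° the vector x − w x lies in the dual cone C*, i.e. [x − w x, y] ≥ 0 for all y ∈ C; moreover, for distinct w, w' ∈ W the sets (1 − w)(C°) = {x − w x : x ∈ C°} and (1 − w')(C°) are disjoint. -/

import Mathlib

noncomputable section

/-- The Minkowski bilinear form `[x, y] = -x₀y₀ + x₁y₁ + ⋯ + xₙyₙ` on `ℝ^{n+1}`. -/
def mink {n : ℕ} (x y : Fin (n + 1) → ℝ) : ℝ :=
  -(x 0 * y 0) + ∑ i : Fin n, x i.succ * y i.succ

/-- The hyperboloid model of hyperbolic `n`-space: `{x | [x, x] = -1, x₀ > 0}`. -/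
def hypSpace (n : ℕ) : Set (Fin (n + 1) → ℝ) :=
  {x | mink x x = -1 ∧ 0 < x 0}

/-- `g` is the Minkowski reflection `x ↦ x - 2([x, e]/[e, e]) e` in a vector `e` with
`[e, e] > 0`. -/
def IsMinkRefl {n : ℕ} (g : (Fin (n + 1) → ℝ) ≃ₗ[ℝ] (Fin (n + 1) → ℝ)) : Prop :=
  ∃ e : Fin (n + 1) → ℝ, 0 < mink e e ∧ ∀ x, g x = x - ((2 * mink x e) / mink e e) • e

/-- The union of the reflection hyperplanes (mirrors) of the Minkowski reflections
belonging to `W`; the mirror of a reflection is exactly its set of fixed points. -/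
def minkMirrors {n : ℕ} (W : Subgroup ((Fin (n + 1) → ℝ) ≃ₗ[ℝ] (Fin (n + 1) → ℝ))) :
    Set (Fin (n + 1) → ℝ) :=
  ⋃ g ∈ {g : (Fin (n + 1) → ℝ) ≃ₗ[ℝ] (Fin (n + 1) → ℝ) | g ∈ W ∧ IsMinkRefl g},
    {x : Fin (n + 1) → ℝ | g x = x}

/-! For `x ∈ C°` and `p` in the open chamber, the orbit `W p` meets the compact hyperbolic ball
`{z ∈ ℍⁿ | [x, p] ≤ [x, z]}` only finitely often, so `[x, ·]` attains a maximum on `W p`, at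
some `z = v p`. Comparing `z` with `s_e z` shows that `z` lies on the same side as `x`, hence as
`p`, of every mirror; the radially projected segment from `p` to `z` then avoids all mirrors, so
`z` is in the open chamber too, and since distinct translates of `C°` are disjoint, `v = 1`.
Hence `[x, v p] ≤ [x, p]` for all `v ∈ W`, which is `[x - w x, y] = [x, y] - [x, w⁻¹ y] ≥ 0`
on `C`.

If `x - w x = x' - w' x'`, expanding `[x - x', x - x'] = [w x - w' x', w x - w' x']` gives
`[x, x'] = [x, w⁻¹ w' x']`, so `x' - w⁻¹ w' x' ∈ C*` vanishes at the interior point `x`; it is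
therefore `0`, i.e. `w x' = w' x'`. -/

open Set Metric Filter Topology

lemma IsPreconnected.mul_pos_of_ne_zero {X : Type*} [TopologicalSpace X] {s : Set X}
    (hs : IsPreconnected s) {f : X → ℝ} (hf : ContinuousOn f s) (h0 : ∀ x ∈ s, f x ≠ 0)
    {a b : X} (ha : a ∈ s) (hb : b ∈ s) : 0 < f a * f b := by
  refine lt_of_not_ge fun h => ?_
  obtain ⟨c, hc, hfc⟩ : 0 ∈ f '' s := by
    rcases mul_nonpos_iff.mp h with ⟨h1, h2⟩ | ⟨h1, h2⟩
    · exact hs.intermediate_value hb ha hf ⟨h2, h1⟩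
    · exact hs.intermediate_value ha hb hf ⟨h1, h2⟩
  exact h0 c hc hfc

lemma exists_forall_le_of_finite_setOf_le {α β : Type*} [LinearOrder β] {f : α → β} {S : Set α}
    {a : α} (ha : a ∈ S) (hfin : {g | g ∈ S ∧ f a ≤ f g}.Finite) :
    ∃ g₀ ∈ S, ∀ g ∈ S, f g ≤ f g₀ := by
  obtain ⟨g₀, ⟨hg₀S, hag₀⟩, hmax⟩ := Set.exists_max_image _ f hfin ⟨a, ha, le_rfl⟩
  refine ⟨g₀, hg₀S, fun g hg => ?_⟩
  rcases le_total (f a) (f g) with h | h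
  · exact hmax g ⟨hg, h⟩
  · exact h.trans hag₀

section Minkowski

variable {n : ℕ}

local notation:max "𝕍" m:max => (Fin (m + 1) → ℝ)

lemma mink_comm (x y : 𝕍 n) : mink x y = mink y x := by
  simp only [mink, mul_comm]

lemma mink_add_left (x y z : 𝕍 n) : mink (x + y) z = mink x z + mink y z := by
  simp only [mink, Pi.add_apply, add_mul, Finset.sum_add_distrib]; ring

lemma mink_sub_left (x y z : 𝕍 n) : mink (x - y) z = mink x z - mink y z := by
  simp only [mink, Pi.sub_apply, sub_mul, Finset.sum_sub_distrib]; ring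

lemma mink_smul_left (t : ℝ) (x z : 𝕍 n) : mink (t • x) z = t * mink x z := by
  simp only [mink, Pi.smul_apply, smul_eq_mul, mul_add, Finset.mul_sum, mul_assoc]; ring

lemma mink_add_right (x y z : 𝕍 n) : mink x (y + z) = mink x y + mink x z := by
  simp only [mink_comm x, mink_add_left]

lemma mink_sub_right (x y z : 𝕍 n) : mink x (y - z) = mink x y - mink x z := by
  simp only [mink_comm x, mink_sub_left]

lemma mink_smul_right (t : ℝ) (x z : 𝕍 n) : mink x (t • z) = t * mink x z := by
  simp only [mink_comm x, mink_smul_left]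

@[fun_prop]
lemma Continuous.mink {X : Type*} [TopologicalSpace X] {f g : X → 𝕍 n} (hf : Continuous f)
    (hg : Continuous g) : Continuous fun t => mink (f t) (g t) := by
  unfold _root_.mink; fun_prop

lemma eq_zero_of_forall_mink_eq_zero {u : 𝕍 n} (h : ∀ y, mink u y = 0) : u = 0 := by
  funext i
  refine Fin.cases ?_ (fun j => ?_) i
  · simpa [mink] using h (Pi.single 0 1)
  · simpa [mink, Pi.single_apply] using h (Pi.single j.succ 1)

def spaceNorm (v : 𝕍 n) : ℝ := √(∑ i : Fin n, v i.succ ^ 2)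

lemma spaceNorm_nonneg (v : 𝕍 n) : 0 ≤ spaceNorm v := Real.sqrt_nonneg _

lemma mink_self (v : 𝕍 n) : mink v v = spaceNorm v ^ 2 - v 0 ^ 2 := by
  rw [spaceNorm, Real.sq_sqrt (by positivity), mink]; simp only [sq]; ring

lemma mink_le_spaceNorm_mul (a b : 𝕍 n) :
    mink a b ≤ -(a 0 * b 0) + spaceNorm a * spaceNorm b := by
  have := Real.sum_mul_le_sqrt_mul_sqrt Finset.univ (fun i : Fin n => a i.succ)
    (fun i => b i.succ)
  rw [mink]; unfold spaceNorm; linarith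

lemma abs_succ_le_spaceNorm (v : 𝕍 n) (j : Fin n) : |v j.succ| ≤ spaceNorm v :=
  Real.abs_le_sqrt (Finset.single_le_sum (f := fun i : Fin n => v i.succ ^ 2)
    (fun _ _ => sq_nonneg _) (Finset.mem_univ j))

def timelikeCone (n : ℕ) : Set (𝕍 n) := {v | mink v v < 0 ∧ 0 < v 0}

lemma hypSpace_subset_timelikeCone : hypSpace n ⊆ timelikeCone n :=
  fun _ hv => ⟨hv.1.trans_lt neg_one_lt_zero, hv.2⟩

lemma isOpen_timelikeCone : IsOpen (timelikeCone n) :=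
  (isOpen_lt (by fun_prop : Continuous fun v : 𝕍 n => mink v v) continuous_const).inter
    (isOpen_lt continuous_const (continuous_apply 0))

lemma spaceNorm_lt_of_mem_timelikeCone {v : 𝕍 n} (hv : v ∈ timelikeCone n) : spaceNorm v < v 0 := by
  have := hv.1; rw [mink_self] at this
  exact (pow_lt_pow_iff_left₀ (spaceNorm_nonneg v) hv.2.le two_ne_zero).mp (by linarith)

lemma mink_neg_of_mem_timelikeCone {a b : 𝕍 n} (ha : a ∈ timelikeCone n) (hb : b ∈ timelikeCone n) :
    mink a b < 0 := by
  have := mul_lt_mul'' (spaceNorm_lt_of_mem_timelikeCone ha) (spaceNorm_lt_of_mem_timelikeCone hb)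
    (spaceNorm_nonneg a) (spaceNorm_nonneg b)
  linarith [mink_le_spaceNorm_mul a b]

lemma convex_timelikeCone : Convex ℝ (timelikeCone n) := by
  intro a ha b hb s t hs ht hst
  have hab := mink_neg_of_mem_timelikeCone ha hb
  refine ⟨?_, ?_⟩
  · simp only [mink_add_left, mink_add_right, mink_smul_left, mink_smul_right, mink_comm b a]
    rcases hs.eq_or_lt with rfl | hs
    · rw [zero_add] at hst; subst hst; nlinarith [hb.1]
    · nlinarith [ha.1, hb.1, mul_pos hs hs, mul_nonneg hs.le ht, mul_nonneg ht ht]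
  · simp only [Pi.add_apply, Pi.smul_apply, smul_eq_mul]
    rcases hs.eq_or_lt with rfl | hs
    · rw [zero_add] at hst; subst hst; nlinarith [hb.2]
    · nlinarith [ha.2, hb.2]

lemma norm_le_of_mem_timelikeCone {v : 𝕍 n} (hv : v ∈ timelikeCone n) : ‖v‖ ≤ v 0 := by
  refine (pi_norm_le_iff_of_nonneg hv.2.le).mpr fun i => Fin.cases ?_ (fun j => ?_) i
  · exact (Real.norm_of_nonneg hv.2.le).le
  · exact (abs_succ_le_spaceNorm v j).trans (spaceNorm_lt_of_mem_timelikeCone hv).le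

lemma hypSpace_eq : hypSpace n = {v | mink v v = -1} ∩ {v | 0 ≤ v 0} := by
  ext v
  refine ⟨fun hv => ⟨hv.1, hv.2.le⟩, fun ⟨h1, h2⟩ => ⟨h1, h2.lt_of_ne fun h0 => ?_⟩⟩
  have h1 : mink v v = -1 := h1
  rw [mink_self, ← h0] at h1; nlinarith [spaceNorm_nonneg v]

lemma isClosed_hypSpace : IsClosed (hypSpace n) := by
  rw [hypSpace_eq]
  exact (isClosed_eq (by fun_prop) continuous_const).inter
    (isClosed_le continuous_const (continuous_apply 0))

lemma mink_le_of_mem_hypSpace (x : 𝕍 n) {z : 𝕍 n} (hz : z ∈ hypSpace n) :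
    mink x z ≤ (spaceNorm x - x 0) * z 0 := by
  have := mul_le_mul_of_nonneg_left (spaceNorm_lt_of_mem_timelikeCone
    (hypSpace_subset_timelikeCone hz)).le (spaceNorm_nonneg x)
  linarith [mink_le_spaceNorm_mul x z]

lemma isCompact_hypSpace_inter_le_mink {x : 𝕍 n} (hx : x ∈ timelikeCone n) (r : ℝ) :
    IsCompact (hypSpace n ∩ {z | r ≤ mink x z}) := by
  have hneg : spaceNorm x - x 0 < 0 := sub_neg.mpr (spaceNorm_lt_of_mem_timelikeCone hx)
  refine (isCompact_closedBall 0 (r / (spaceNorm x - x 0))).of_isClosed_subset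
    (isClosed_hypSpace.inter (isClosed_le continuous_const (by fun_prop))) fun z ⟨hz, hr⟩ => ?_
  rw [mem_closedBall_zero_iff, le_div_iff_of_neg hneg]
  have hr : r ≤ mink x z := hr
  have := mul_le_mul_of_nonpos_right (norm_le_of_mem_timelikeCone (hypSpace_subset_timelikeCone hz))
    hneg.le
  linarith [mink_le_of_mem_hypSpace x hz]

/-- Radial projection of the future light cone onto the hyperboloid. -/
def hypNormalize (v : 𝕍 n) : 𝕍 n := (√(-mink v v))⁻¹ • v

lemma sqrt_smul_hypNormalize {v : 𝕍 n} (hv : v ∈ timelikeCone n) :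
    √(-mink v v) • hypNormalize v = v := by
  rw [hypNormalize, smul_smul, mul_inv_cancel₀ (Real.sqrt_pos.mpr (neg_pos.mpr hv.1)).ne',
    one_smul]

lemma hypNormalize_mem_hypSpace {v : 𝕍 n} (hv : v ∈ timelikeCone n) :
    hypNormalize v ∈ hypSpace n := by
  have hm := Real.sqrt_pos.mpr (neg_pos.mpr hv.1)
  have hm2 := Real.sq_sqrt (neg_pos.mpr hv.1).le
  refine ⟨?_, ?_⟩
  · rw [hypNormalize, mink_smul_left, mink_smul_right]
    field_simp
    linarith
  · simp only [hypNormalize, Pi.smul_apply, smul_eq_mul]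
    exact mul_pos (inv_pos.mpr hm) hv.2

lemma hypNormalize_eq_self {z : 𝕍 n} (hz : z ∈ hypSpace n) : hypNormalize z = z := by
  simp [hypNormalize, hz.1]

lemma continuousOn_hypNormalize : ContinuousOn hypNormalize (timelikeCone n) :=
  ((Continuous.continuousOn (by fun_prop)).inv₀ fun v hv =>
    (Real.sqrt_pos.mpr (neg_pos.mpr hv.1)).ne').smul continuousOn_id

lemma mink_apply_left_eq_mink_inv {v : 𝕍 n ≃ₗ[ℝ] 𝕍 n} (hv : ∀ x y, mink (v x) (v y) = mink x y)
    (x y : 𝕍 n) : mink (v x) y = mink x (v⁻¹ y) := by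
  simpa using hv x (v⁻¹ y)

def IsMinkReflIn (g : 𝕍 n ≃ₗ[ℝ] 𝕍 n) (e : 𝕍 n) : Prop :=
  0 < mink e e ∧ ∀ x, g x = x - ((2 * mink x e) / mink e e) • e

namespace IsMinkReflIn

variable {g : 𝕍 n ≃ₗ[ℝ] 𝕍 n} {e : 𝕍 n}

lemma apply_eq_self_iff (hg : IsMinkReflIn g e) (v : 𝕍 n) : g v = v ↔ mink v e = 0 := by
  have he : e ≠ 0 := by rintro rfl; exact lt_irrefl 0 (by simpa [mink] using hg.1)
  rw [hg.2 v, sub_eq_self, smul_eq_zero, div_eq_zero_iff, mul_eq_zero]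
  simp [hg.1.ne', he]

lemma ne_one (hg : IsMinkReflIn g e) : g ≠ 1 := fun h =>
  hg.1.ne' ((hg.apply_eq_self_iff e).mp (by rw [h]; rfl))

lemma mink_apply_right (hg : IsMinkReflIn g e) (x z : 𝕍 n) :
    mink x (g z) = mink x z - 2 * mink z e / mink e e * mink x e := by
  rw [hg.2 z, mink_sub_right, mink_smul_right]

lemma conj {v : 𝕍 n ≃ₗ[ℝ] 𝕍 n} (hv : ∀ x y, mink (v x) (v y) = mink x y)
    (hg : IsMinkReflIn g e) : IsMinkReflIn (v⁻¹ * g * v) (v⁻¹ e) := by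
  have hee : mink (v⁻¹ e) (v⁻¹ e) = mink e e := by
    simpa using (mink_apply_left_eq_mink_inv hv (v⁻¹ e) e).symm
  refine ⟨hee ▸ hg.1, fun y => ?_⟩
  rw [LinearEquiv.mul_apply, LinearEquiv.mul_apply, hg.2, map_sub, map_smul, hee,
    mink_apply_left_eq_mink_inv hv, ← LinearEquiv.mul_apply, inv_mul_cancel,
    LinearEquiv.coe_one, id]

end IsMinkReflIn

section Mirrors

variable {W : Subgroup (𝕍 n ≃ₗ[ℝ] 𝕍 n)}

lemma mem_minkMirrors_iff {v : 𝕍 n} :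
    v ∈ minkMirrors W ↔ ∃ g ∈ W, ∃ e, IsMinkReflIn g e ∧ mink v e = 0 := by
  simp only [minkMirrors, mem_iUnion₂]
  constructor
  · rintro ⟨g, ⟨hgW, e, hg : IsMinkReflIn g e⟩, hfix⟩
    exact ⟨g, hgW, e, hg, (hg.apply_eq_self_iff v).mp hfix⟩
  · rintro ⟨g, hgW, e, hg, hv⟩
    exact ⟨g, ⟨hgW, e, hg⟩, (hg.apply_eq_self_iff v).mpr hv⟩

lemma mink_ne_zero_of_notMem_minkMirrors {g : 𝕍 n ≃ₗ[ℝ] 𝕍 n} {e v : 𝕍 n} (hgW : g ∈ W)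
    (hg : IsMinkReflIn g e) (hv : v ∉ minkMirrors W) : mink v e ≠ 0 :=
  fun h => hv (mem_minkMirrors_iff.mpr ⟨g, hgW, e, hg, h⟩)

lemma smul_mem_minkMirrors_iff {c : ℝ} (hc : c ≠ 0) {v : 𝕍 n} :
    c • v ∈ minkMirrors W ↔ v ∈ minkMirrors W := by
  simp only [mem_minkMirrors_iff, mink_smul_left, mul_eq_zero, hc, false_or]

lemma hypNormalize_mem_minkMirrors_iff {v : 𝕍 n} (hv : v ∈ timelikeCone n) :
    hypNormalize v ∈ minkMirrors W ↔ v ∈ minkMirrors W :=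
  smul_mem_minkMirrors_iff (inv_ne_zero (Real.sqrt_pos.mpr (neg_pos.mpr hv.1)).ne')

lemma apply_notMem_minkMirrors (hform : ∀ w ∈ W, ∀ x y : 𝕍 n, mink (w x) (w y) = mink x y)
    {v : 𝕍 n ≃ₗ[ℝ] 𝕍 n} (hv : v ∈ W) {p : 𝕍 n} (hp : p ∉ minkMirrors W) : v p ∉ minkMirrors W := by
  rw [mem_minkMirrors_iff]
  rintro ⟨g, hgW, e, hg, hpe⟩
  refine mink_ne_zero_of_notMem_minkMirrors (mul_mem (mul_mem (inv_mem hv) hgW) hv)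
    (hg.conj (hform v hv)) hp ?_
  rwa [← mink_apply_left_eq_mink_inv (hform v hv)]

end Mirrors

lemma eq_zero_of_mink_nonneg_of_mink_eq_zero {C : Set (𝕍 n)} {u x : 𝕍 n}
    (hu : ∀ y ∈ C, 0 ≤ mink u y) (hx : x ∈ interior C) (hux : mink u x = 0) : u = 0 := by
  refine eq_zero_of_forall_mink_eq_zero fun d => ?_
  have hline : ∀ᶠ t in 𝓝 (0 : ℝ), x + t • d ∈ C :=
    ((by fun_prop : Continuous fun t : ℝ => x + t • d).tendsto' 0 x (by simp)).eventually
      (mem_interior_iff_mem_nhds.mp hx)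
  have hmin : IsLocalMin (fun t : ℝ => t * mink u d) 0 := by
    filter_upwards [hline] with t ht
    simpa [mink_add_right, mink_smul_right, hux] using hu _ ht
  exact hmin.hasDerivAt_eq_zero (hasDerivAt_mul_const _)

def ProperlyDiscontinuousOnHyp (W : Subgroup (𝕍 n ≃ₗ[ℝ] 𝕍 n)) : Prop :=
  ∀ K : Set (𝕍 n), IsCompact K → K ⊆ hypSpace n →
    {g : 𝕍 n ≃ₗ[ℝ] 𝕍 n | g ∈ W ∧ ∃ x ∈ K, g x ∈ K}.Finite

def DisjointTranslates (W : Subgroup (𝕍 n ≃ₗ[ℝ] 𝕍 n)) (S : Set (𝕍 n)) : Prop :=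
  ∀ w ∈ W, ∀ x ∈ S, w x ∈ S → w = 1

def openChamber (W : Subgroup (𝕍 n ≃ₗ[ℝ] 𝕍 n)) (x₀ : 𝕍 n) : Set (𝕍 n) :=
  connectedComponentIn (hypSpace n \ minkMirrors W) x₀

/-- The cone `C` over `D = closure (openChamber W x₀) ∩ ℍⁿ`. -/
def chamberCone (W : Subgroup (𝕍 n ≃ₗ[ℝ] 𝕍 n)) (x₀ : 𝕍 n) : Set (𝕍 n) :=
  {v | ∃ t : ℝ, 0 ≤ t ∧ ∃ d ∈ closure (openChamber W x₀) ∩ hypSpace n, v = t • d}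

section Chamber

variable {W : Subgroup (𝕍 n ≃ₗ[ℝ] 𝕍 n)} {x₀ : 𝕍 n}

lemma openChamber_subset : openChamber W x₀ ⊆ hypSpace n \ minkMirrors W :=
  connectedComponentIn_subset _ _

lemma mink_mul_pos_of_mem_openChamber {g : 𝕍 n ≃ₗ[ℝ] 𝕍 n} {e q q' : 𝕍 n} (hgW : g ∈ W)
    (hg : IsMinkReflIn g e) (hq : q ∈ openChamber W x₀) (hq' : q' ∈ openChamber W x₀) :
    0 < mink q e * mink q' e :=
  isPreconnected_connectedComponentIn.mul_pos_of_ne_zero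
    (Continuous.continuousOn (by fun_prop))
    (fun _ hr => mink_ne_zero_of_notMem_minkMirrors hgW hg (openChamber_subset hr).2) hq hq'

lemma mink_mul_nonneg_of_mem_chamberCone {g : 𝕍 n ≃ₗ[ℝ] 𝕍 n} {e v q : 𝕍 n} (hgW : g ∈ W)
    (hg : IsMinkReflIn g e) (hv : v ∈ chamberCone W x₀) (hq : q ∈ openChamber W x₀) :
    0 ≤ mink v e * mink q e := by
  obtain ⟨t, ht, d, ⟨hd, -⟩, rfl⟩ := hv
  have hcl : closure (openChamber W x₀) ⊆ {c | 0 ≤ mink c e * mink q e} :=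
    closure_minimal (fun c hc => (mink_mul_pos_of_mem_openChamber hgW hg hc hq).le)
      (isClosed_le continuous_const (by fun_prop))
  rw [mink_smul_left, mul_assoc]
  exact mul_nonneg ht (hcl hd)

lemma mink_ne_zero_of_mem_interior
    (hfree : DisjointTranslates W (interior (chamberCone W x₀)))
    {g : 𝕍 n ≃ₗ[ℝ] 𝕍 n} {e x : 𝕍 n} (hgW : g ∈ W) (hg : IsMinkReflIn g e)
    (hx : x ∈ interior (chamberCone W x₀)) : mink x e ≠ 0 := fun h =>
  hg.ne_one (hfree g hgW x hx (((hg.apply_eq_self_iff x).mpr h).symm ▸ hx))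

lemma mink_mul_pos_of_mem_interior
    (hfree : DisjointTranslates W (interior (chamberCone W x₀)))
    {g : 𝕍 n ≃ₗ[ℝ] 𝕍 n} {e x q : 𝕍 n} (hgW : g ∈ W) (hg : IsMinkReflIn g e)
    (hx : x ∈ interior (chamberCone W x₀)) (hq : q ∈ openChamber W x₀) :
    0 < mink x e * mink q e :=
  (mink_mul_nonneg_of_mem_chamberCone hgW hg (interior_subset hx) hq).lt_of_ne'
    (mul_ne_zero (mink_ne_zero_of_mem_interior hfree hgW hg hx)
      (mink_ne_zero_of_notMem_minkMirrors hgW hg (openChamber_subset hq).2))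

lemma hypNormalize_mem_openChamber {a b : 𝕍 n} (ha : a ∈ openChamber W x₀)
    (hb : b ∈ timelikeCone n) (hab : ∀ v ∈ segment ℝ a b, v ∉ minkMirrors W) :
    hypNormalize b ∈ openChamber W x₀ := by
  have haO := openChamber_subset ha
  have hseg := convex_timelikeCone.segment_subset (hypSpace_subset_timelikeCone haO.1) hb
  have hsub : hypNormalize '' segment ℝ a b ⊆ hypSpace n \ minkMirrors W := by
    rintro _ ⟨v, hv, rfl⟩
    exact ⟨hypNormalize_mem_hypSpace (hseg hv),
      (hypNormalize_mem_minkMirrors_iff (hseg hv)).not.mpr (hab v hv)⟩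
  have := ((convex_segment a b).isPreconnected.image _
    (continuousOn_hypNormalize.mono hseg)).subset_connectedComponentIn
    (mem_image_of_mem _ (left_mem_segment ℝ a b)) hsub
    (mem_image_of_mem _ (right_mem_segment ℝ a b))
  rwa [hypNormalize_eq_self haO.1, ← connectedComponentIn_eq ha] at this

lemma mem_openChamber_of_forall_mink_mul_pos {a b : 𝕍 n} (ha : a ∈ openChamber W x₀)
    (hb : b ∈ hypSpace n)
    (hsign : ∀ g ∈ W, ∀ e, IsMinkReflIn g e → 0 < mink a e * mink b e) :
    b ∈ openChamber W x₀ := by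
  rw [← hypNormalize_eq_self hb]
  refine hypNormalize_mem_openChamber ha (hypSpace_subset_timelikeCone hb) fun v hv hvM => ?_
  obtain ⟨g, hgW, e, hg, hve⟩ := mem_minkMirrors_iff.mp hvM
  obtain ⟨s, t, hs, ht, hst, rfl⟩ := hv
  have hab := hsign g hgW e hg
  rw [mink_add_left, mink_smul_left, mink_smul_left] at hve
  have h1 : s * mink a e ^ 2 + t * (mink a e * mink b e) = 0 := by
    linear_combination mink a e * hve
  have ht0 : t = 0 := by nlinarith [mul_nonneg hs (sq_nonneg (mink a e)), mul_nonneg ht hab.le]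
  rw [ht0, zero_mul, add_zero, show s = 1 by linarith, one_mul] at hve
  rw [hve, zero_mul] at hab
  exact lt_irrefl 0 hab

lemma minkMirrors_compl_mem_nhds
    (hpd : ProperlyDiscontinuousOnHyp W)
    {q : 𝕍 n} (hq : q ∈ hypSpace n \ minkMirrors W) : (minkMirrors W)ᶜ ∈ 𝓝 q := by
  obtain ⟨δ, hδ, hcone⟩ := nhds_basis_closedBall.mem_iff.mp
    (isOpen_timelikeCone.mem_nhds (hypSpace_subset_timelikeCone hq.1))
  set K := hypNormalize '' closedBall q δ
  have hK : IsCompact K :=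
    (isCompact_closedBall q δ).image_of_continuousOn (continuousOn_hypNormalize.mono hcone)
  have hKH : K ⊆ hypSpace n :=
    image_subset_iff.mpr fun v hv => hypNormalize_mem_hypSpace (hcone hv)
  -- only the finitely many reflections with a fixed point in `K` can have a mirror near `q`
  set G := {g : 𝕍 n ≃ₗ[ℝ] 𝕍 n | (g ∈ W ∧ ∃ x ∈ K, g x ∈ K) ∧ IsMinkRefl g}
  have hG : G.Finite := (hpd K hK hKH).subset fun g hg => hg.1
  set U := ⋃ g ∈ G, {v : 𝕍 n | g v = v}
  have hU : IsClosed U := hG.isClosed_biUnion fun g _ =>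
    isClosed_eq g.toLinearMap.continuous_of_finiteDimensional continuous_id
  have hqU : q ∉ U := fun h => hq.2 <| by
    obtain ⟨g, hg, hfix⟩ := mem_iUnion₂.mp h
    exact mem_iUnion₂.mpr ⟨g, ⟨hg.1.1, hg.2⟩, hfix⟩
  filter_upwards [hU.isOpen_compl.mem_nhds hqU, closedBall_mem_nhds q hδ] with v hvU hvδ hv
  obtain ⟨g, hgW, e, hg, hve⟩ := mem_minkMirrors_iff.mp hv
  have hNK : hypNormalize v ∈ K := mem_image_of_mem _ hvδ
  have hfix : g (hypNormalize v) = hypNormalize v :=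
    (hg.apply_eq_self_iff _).mpr (by rw [hypNormalize, mink_smul_left, hve, mul_zero])
  exact hvU (mem_iUnion₂.mpr
    ⟨g, ⟨⟨hgW, _, hNK, by rwa [hfix]⟩, e, hg⟩, (hg.apply_eq_self_iff v).mpr hve⟩)

lemma openChamber_subset_interior_chamberCone
    (hpd : ProperlyDiscontinuousOnHyp W) :
    openChamber W x₀ ⊆ interior (chamberCone W x₀) := by
  intro q hq
  have hqO := openChamber_subset hq
  obtain ⟨δ, hδ, hball⟩ := Metric.mem_nhds_iff.mp (inter_mem (minkMirrors_compl_mem_nhds hpd hqO)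
    (isOpen_timelikeCone.mem_nhds (hypSpace_subset_timelikeCone hqO.1)))
  refine mem_interior.mpr ⟨ball q δ, fun v hv => ?_, isOpen_ball, mem_ball_self hδ⟩
  have hN := hypNormalize_mem_openChamber hq (hball hv).2 fun w hw =>
    (hball ((convex_ball q δ).segment_subset (mem_ball_self hδ) hv hw)).1
  exact ⟨√(-mink v v), Real.sqrt_nonneg _, hypNormalize v,
    ⟨subset_closure hN, hypNormalize_mem_hypSpace (hball hv).2⟩,
    (sqrt_smul_hypNormalize (hball hv).2).symm⟩

lemma interior_chamberCone_subset_timelikeCone :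
    interior (chamberCone W x₀) ⊆ timelikeCone n := by
  intro x hx
  have hsub : chamberCone W x₀ ⊆ Function.eval 0 ⁻¹' Ici 0 := by
    rintro _ ⟨t, ht, d, ⟨-, hd⟩, rfl⟩
    exact mul_nonneg ht hd.2.le
  have hx0 : 0 < x 0 := by
    have := interior_mono hsub hx
    rwa [← (isOpenMap_eval 0).preimage_interior_eq_interior_preimage (continuous_apply 0),
      interior_Ici] at this
  obtain ⟨t, ht, d, ⟨-, hd⟩, rfl⟩ := interior_subset hx
  have htd : 0 < t * d 0 := hx0
  have htpos : 0 < t := pos_of_mul_pos_left htd hd.2.le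
  refine ⟨?_, hx0⟩
  rw [mink_smul_left, mink_smul_right, hd.1]
  nlinarith

lemma finite_setOf_mink_le_mink_apply
    (hHinv : ∀ w ∈ W, ∀ x ∈ hypSpace n, w x ∈ hypSpace n)
    (hpd : ProperlyDiscontinuousOnHyp W)
    {x p : 𝕍 n} (hx : x ∈ timelikeCone n) (hp : p ∈ hypSpace n) :
    {g : 𝕍 n ≃ₗ[ℝ] 𝕍 n | g ∈ W ∧ mink x p ≤ mink x (g p)}.Finite := by
  refine (hpd _ (isCompact_hypSpace_inter_le_mink hx (mink x p)) inter_subset_left).subset ?_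
  rintro g ⟨hgW, hg⟩
  exact ⟨hgW, p, ⟨hp, le_refl (mink x p)⟩, hHinv g hgW p hp, hg⟩

lemma mink_mul_pos_of_mink_apply_le
    (hfree : DisjointTranslates W (interior (chamberCone W x₀)))
    {g : 𝕍 n ≃ₗ[ℝ] 𝕍 n} {e x z : 𝕍 n} (hgW : g ∈ W) (hg : IsMinkReflIn g e)
    (hx : x ∈ interior (chamberCone W x₀)) (hz : z ∉ minkMirrors W)
    (hle : mink x (g z) ≤ mink x z) : 0 < mink x e * mink z e := by
  rw [hg.mink_apply_right,
    show 2 * mink z e / mink e e * mink x e = 2 / mink e e * (mink x e * mink z e) by ring] at hle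
  refine ((mul_nonneg_iff_of_pos_left (div_pos two_pos hg.1)).mp (by linarith)).lt_of_ne' ?_
  exact mul_ne_zero (mink_ne_zero_of_mem_interior hfree hgW hg hx)
    (mink_ne_zero_of_notMem_minkMirrors hgW hg hz)

lemma mink_apply_le_of_mem_openChamber
    (hform : ∀ w ∈ W, ∀ x y : 𝕍 n, mink (w x) (w y) = mink x y)
    (hHinv : ∀ w ∈ W, ∀ x ∈ hypSpace n, w x ∈ hypSpace n)
    (hpd : ProperlyDiscontinuousOnHyp W)
    (hfree : DisjointTranslates W (interior (chamberCone W x₀)))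
    {x p : 𝕍 n} (hx : x ∈ interior (chamberCone W x₀)) (hp : p ∈ openChamber W x₀)
    {v : 𝕍 n ≃ₗ[ℝ] 𝕍 n} (hv : v ∈ W) : mink x (v p) ≤ mink x p := by
  have hpO := openChamber_subset hp
  obtain ⟨v₀, hv₀W, hmax⟩ := exists_forall_le_of_finite_setOf_le (f := fun g => mink x (g p))
    (one_mem W) (finite_setOf_mink_le_mink_apply hHinv hpd
      (interior_chamberCone_subset_timelikeCone hx) hpO.1)
  have hz : v₀ p ∈ openChamber W x₀ := by
    refine mem_openChamber_of_forall_mink_mul_pos hp (hHinv v₀ hv₀W p hpO.1) fun g hgW e hg => ?_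
    have h₁ := mink_mul_pos_of_mem_interior hfree hgW hg hx hp
    have h₂ := mink_mul_pos_of_mink_apply_le hfree hgW hg hx
      (apply_notMem_minkMirrors hform hv₀W hpO.2) (hmax (g * v₀) (mul_mem hgW hv₀W))
    have h₃ := mul_pos h₁ h₂
    rw [show mink x e * mink p e * (mink x e * mink (v₀ p) e)
      = mink x e ^ 2 * (mink p e * mink (v₀ p) e) by ring] at h₃
    exact pos_of_mul_pos_right h₃ (sq_nonneg _)
  have hv₀ : v₀ = 1 := hfree v₀ hv₀W p (openChamber_subset_interior_chamberCone hpd hp)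
    (openChamber_subset_interior_chamberCone hpd hz)
  simpa [hv₀] using hmax v hv

lemma mink_sub_apply_nonneg
    (hform : ∀ w ∈ W, ∀ x y : 𝕍 n, mink (w x) (w y) = mink x y)
    (hHinv : ∀ w ∈ W, ∀ x ∈ hypSpace n, w x ∈ hypSpace n)
    (hpd : ProperlyDiscontinuousOnHyp W)
    (hfree : DisjointTranslates W (interior (chamberCone W x₀)))
    {w : 𝕍 n ≃ₗ[ℝ] 𝕍 n} (hw : w ∈ W) {x y : 𝕍 n} (hx : x ∈ interior (chamberCone W x₀))
    (hy : y ∈ chamberCone W x₀) : 0 ≤ mink (x - w x) y := by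
  obtain ⟨t, ht, d, ⟨hd, -⟩, rfl⟩ := hy
  have hle : closure (openChamber W x₀) ⊆ {p | mink x (w⁻¹ p) ≤ mink x p} :=
    closure_minimal (fun p hp => mink_apply_le_of_mem_openChamber hform hHinv hpd hfree hx hp
      (inv_mem hw))
      (isClosed_le (continuous_const.mink (w⁻¹).toLinearMap.continuous_of_finiteDimensional)
        (by fun_prop))
  rw [mink_smul_right, mink_sub_left, mink_apply_left_eq_mink_inv (hform w hw)]
  exact mul_nonneg ht (sub_nonneg.mpr (hle hd))

end Chamber

lemma apply_eq_of_sub_apply_eq {W : Subgroup (𝕍 n ≃ₗ[ℝ] 𝕍 n)}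
    (hform : ∀ w ∈ W, ∀ x y : 𝕍 n, mink (w x) (w y) = mink x y)
    {C : Set (𝕍 n)}
    (hdual : ∀ v ∈ W, ∀ x ∈ interior C, ∀ y ∈ C, 0 ≤ mink (x - v x) y)
    {w w' : 𝕍 n ≃ₗ[ℝ] 𝕍 n} (hw : w ∈ W) (hw' : w' ∈ W) {x x' : 𝕍 n} (hx : x ∈ interior C)
    (hx' : x' ∈ interior C) (h : x - w x = x' - w' x') : w x' = w' x' := by
  have hv : w⁻¹ * w' ∈ W := mul_mem (inv_mem hw) hw'
  have hsq : mink (x - x') (x - x') = mink (w x - w' x') (w x - w' x') := by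
    rw [sub_eq_sub_iff_sub_eq_sub.mp h]
  have hxx' : mink x x' = mink x ((w⁻¹ * w') x') := by
    rw [LinearEquiv.mul_apply, ← mink_apply_left_eq_mink_inv (hform w hw)]
    simp only [mink_sub_left, mink_sub_right, hform w hw, hform w' hw', mink_comm x' x,
      mink_comm (w' x') (w x)] at hsq
    linarith
  have hfix : x' - (w⁻¹ * w') x' = 0 := eq_zero_of_mink_nonneg_of_mink_eq_zero
    (hdual _ hv x' hx') hx (by rw [mink_sub_left, mink_comm x', mink_comm _ x, ← hxx', sub_self])
  calc w x' = w ((w⁻¹ * w') x') := by rw [(sub_eq_zero.mp hfix).symm]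
    _ = w' x' := by rw [← LinearEquiv.mul_apply, mul_inv_cancel_left]

end Minkowski

theorem hyperbolic_oneSub_mem_dual_general
    {n : ℕ} (W : Subgroup ((Fin (n + 1) → ℝ) ≃ₗ[ℝ] (Fin (n + 1) → ℝ)))
    (D C : Set (Fin (n + 1) → ℝ))
    (hform : ∀ w ∈ W, ∀ x y : Fin (n + 1) → ℝ, mink (w x) (w y) = mink x y)
    (hHinv : ∀ w ∈ W, ∀ x ∈ hypSpace n, w x ∈ hypSpace n)
    (hpd : ∀ K : Set (Fin (n + 1) → ℝ), IsCompact K → K ⊆ hypSpace n →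
      {g : (Fin (n + 1) → ℝ) ≃ₗ[ℝ] (Fin (n + 1) → ℝ) | g ∈ W ∧ ∃ x ∈ K, g x ∈ K}.Finite)
    (hD : ∃ x₀ ∈ hypSpace n \ minkMirrors W,
      D = closure (connectedComponentIn (hypSpace n \ minkMirrors W) x₀) ∩ hypSpace n)
    (hC : C = {v : Fin (n + 1) → ℝ | ∃ t : ℝ, 0 ≤ t ∧ ∃ d ∈ D, v = t • d})
    (hdisj : ∀ w ∈ W, ∀ w' ∈ W, w ≠ w' →
      ∀ x ∈ interior C, ∀ x' ∈ interior C, w x ≠ w' x') :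
    (∀ w ∈ W, ∀ x ∈ interior C, ∀ y ∈ C, 0 ≤ mink (x - w x) y) ∧
    (∀ w ∈ W, ∀ w' ∈ W, w ≠ w' →
      Disjoint {u : Fin (n + 1) → ℝ | ∃ x ∈ interior C, u = x - w x}
        {u : Fin (n + 1) → ℝ | ∃ x ∈ interior C, u = x - w' x}) := by
  obtain ⟨x₀, -, rfl⟩ := hD
  subst hC
  have hfree : DisjointTranslates W (interior (chamberCone W x₀)) :=
    fun w hw x hx hwx => of_not_not fun h => hdisj w hw 1 (one_mem W) h x hx (w x) hwx rfl
  have hdual : ∀ w ∈ W, ∀ x ∈ interior (chamberCone W x₀), ∀ y ∈ chamberCone W x₀,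
      0 ≤ mink (x - w x) y :=
    fun w hw x hx y hy => mink_sub_apply_nonneg hform hHinv hpd hfree hw hx hy
  refine ⟨hdual, fun w hw w' hw' hne => Set.disjoint_left.mpr ?_⟩
  rintro _ ⟨x, hx, rfl⟩ ⟨x', hx', h⟩
  exact hdisj w hw w' hw' hne x' hx' x' hx' (apply_eq_of_sub_apply_eq hform hdual hw hw' hx hx' h)

/-- For a cocompact hyperbolic reflection group `W` with fundamental chamber cone `C`:
every `x - w x` with `x ∈ C°` lies in the dual cone `C*`, and for distinct `w, w' ∈ W`
the sets `(1 - w)(C°)` and `(1 - w')(C°)` are disjoint. -/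
theorem hyperbolic_oneSub_mem_dual
    {n : ℕ} (W : Subgroup ((Fin (n + 1) → ℝ) ≃ₗ[ℝ] (Fin (n + 1) → ℝ)))
    (D C : Set (Fin (n + 1) → ℝ))
    (hform : ∀ w ∈ W, ∀ x y : Fin (n + 1) → ℝ, mink (w x) (w y) = mink x y)
    (hHinv : ∀ w ∈ W, ∀ x ∈ hypSpace n, w x ∈ hypSpace n)
    (hWgen : Subgroup.closure
      {g : (Fin (n + 1) → ℝ) ≃ₗ[ℝ] (Fin (n + 1) → ℝ) | g ∈ W ∧ IsMinkRefl g} = W)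
    (hpd : ∀ K : Set (Fin (n + 1) → ℝ), IsCompact K → K ⊆ hypSpace n →
      {g : (Fin (n + 1) → ℝ) ≃ₗ[ℝ] (Fin (n + 1) → ℝ) | g ∈ W ∧ ∃ x ∈ K, g x ∈ K}.Finite)
    (hD : ∃ x₀ ∈ hypSpace n \ minkMirrors W,
      D = closure (connectedComponentIn (hypSpace n \ minkMirrors W) x₀) ∩ hypSpace n)
    (hDcpt : IsCompact D)
    (hcover : ∀ x ∈ hypSpace n, ∃ w ∈ W, ∃ d ∈ D, w d = x)
    (hC : C = {v : Fin (n + 1) → ℝ | ∃ t : ℝ, 0 ≤ t ∧ ∃ d ∈ D, v = t • d})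
    (hdisj : ∀ w ∈ W, ∀ w' ∈ W, w ≠ w' →
      ∀ x ∈ interior C, ∀ x' ∈ interior C, w x ≠ w' x') :
    (∀ w ∈ W, ∀ x ∈ interior C, ∀ y ∈ C, 0 ≤ mink (x - w x) y) ∧
    (∀ w ∈ W, ∀ w' ∈ W, w ≠ w' →
      Disjoint {u : Fin (n + 1) → ℝ | ∃ x ∈ interior C, u = x - w x}
        {u : Fin (n + 1) → ℝ | ∃ x ∈ interior C, u = x - w' x}) :=
  hyperbolic_oneSub_mem_dual_general W D C hform hHinv hpd hD hC hdisj
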